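/- For any polynomial P(x,y) on ℝ², there exist an integer N ≤ deg P and polynomials p̃₍k,ℓ₎ of one variable such that P(r cos φ, r sin φ) = ∑_{k=0}^{N} ∑_{ℓ=1}^{a_k} p̃₍k,ℓ₎(r²) · r^k · Y₍k,ℓ₎(φ) for all r ≥ 0 and φ ∈ [0, 2π] (the Almansi/Gauss decomposition). -/
import Mathlib


open Real

/-- Orthonormalized circular harmonics: `ℓ` ranges over `Finset.range (a k)`
with `a 0 = 1` and `a k = 2` for `k ≥ 1`. -/
noncomputable def Yharm (k ℓ : ℕ) (φ : ℝ) : ℝ :=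
  if k = 0 then 1 / Real.sqrt (2 * π)
  else if ℓ = 0 then Real.cos (k * φ) / Real.sqrt π
  else Real.sin (k * φ) / Real.sqrt π


namespace Almansi

open Finset


variable (N : ℕ) (φ : ℝ)

lemma shift_up (u t : ℕ → ℝ) :
    ∑ k ∈ Finset.range (N + 1), u k * t (k + 1)
      = ∑ k ∈ Finset.range (N + 2), (if k = 0 then 0 else u (k - 1)) * t k := by
  rw [Finset.sum_range_succ' (fun k => (if k = 0 then 0 else u (k - 1)) * t k) (N + 1)]
  simp

lemma shift_down (u t : ℕ → ℝ) (hu : ∀ k, N < k → u k = 0) :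
    ∑ k ∈ Finset.range (N + 1), u k * t (k - 1)
      = u 0 * t 0 + ∑ k ∈ Finset.range (N + 2), u (k + 1) * t k := by
  rw [Finset.sum_range_succ' (fun k => u k * t (k - 1)) N]
  have h : ∑ k ∈ Finset.range N, u (k + 1) * t k
      = ∑ k ∈ Finset.range (N + 2), u (k + 1) * t k := by
    apply Finset.sum_subset (Finset.range_subset_range.2 (by omega))
    intro k hk hk'
    rw [hu (k + 1) (by simp [Finset.mem_range] at hk' ⊢; omega)]
    ring
  simp only [Nat.add_sub_cancel]
  rw [h]; ring

lemma coscos (j : ℕ) :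
    Real.cos φ * Real.cos ((j + 1 : ℕ) * φ)
      = (Real.cos ((j + 2 : ℕ) * φ) + Real.cos ((j : ℕ) * φ)) / 2 := by
  push_cast
  rw [show ((j : ℝ) + 2) * φ = ((j : ℝ) + 1) * φ + φ by ring,
      show (j : ℝ) * φ = ((j : ℝ) + 1) * φ - φ by ring,
      Real.cos_add, Real.cos_sub]
  ring

lemma cossin (j : ℕ) :
    Real.cos φ * Real.sin ((j + 1 : ℕ) * φ)
      = (Real.sin ((j + 2 : ℕ) * φ) + Real.sin ((j : ℕ) * φ)) / 2 := by
  push_cast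
  rw [show ((j : ℝ) + 2) * φ = ((j : ℝ) + 1) * φ + φ by ring,
      show (j : ℝ) * φ = ((j : ℝ) + 1) * φ - φ by ring,
      Real.sin_add, Real.sin_sub]
  ring

lemma sincos (j : ℕ) :
    Real.sin φ * Real.cos ((j + 1 : ℕ) * φ)
      = (Real.sin ((j + 2 : ℕ) * φ) - Real.sin ((j : ℕ) * φ)) / 2 := by
  push_cast
  rw [show ((j : ℝ) + 2) * φ = ((j : ℝ) + 1) * φ + φ by ring,
      show (j : ℝ) * φ = ((j : ℝ) + 1) * φ - φ by ring,
      Real.sin_add, Real.sin_sub]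
  ring

lemma sinsin (j : ℕ) :
    Real.sin φ * Real.sin ((j + 1 : ℕ) * φ)
      = (Real.cos ((j : ℕ) * φ) - Real.cos ((j + 2 : ℕ) * φ)) / 2 := by
  push_cast
  rw [show ((j : ℝ) + 2) * φ = ((j : ℝ) + 1) * φ + φ by ring,
      show (j : ℝ) * φ = ((j : ℝ) + 1) * φ - φ by ring,
      Real.cos_add, Real.cos_sub]
  ring

lemma sum_cos_mul_cos (A : ℕ → ℝ) (hA : ∀ k, N < k → A k = 0) :
    Real.cos φ * ∑ k ∈ Finset.range (N + 1), A k * Real.cos ((k : ℕ) * φ)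
      = ∑ k ∈ Finset.range (N + 2),
          (if k = 0 then A 1 / 2 else if k = 1 then A 0 + A 2 / 2
            else (A (k - 1) + A (k + 1)) / 2) * Real.cos ((k : ℕ) * φ) := by
  have step : ∀ k : ℕ, A k * (Real.cos φ * Real.cos ((k : ℕ) * φ))
      = (A k / 2) * Real.cos ((k + 1 : ℕ) * φ) + (A k / 2) * Real.cos ((k - 1 : ℕ) * φ)
        + (if k = 0 then A 0 * (Real.cos φ - 1) / 2 else 0) := by
    intro k
    rcases k with _ | j
    · simp; ring
    · rw [coscos φ j]
      simp only [Nat.add_sub_cancel, Nat.succ_ne_zero, if_false]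
      ring
  have lhs_eq : Real.cos φ * ∑ k ∈ Finset.range (N + 1), A k * Real.cos ((k : ℕ) * φ)
      = ∑ k ∈ Finset.range (N + 1), A k * (Real.cos φ * Real.cos ((k : ℕ) * φ)) := by
    rw [Finset.mul_sum]; apply Finset.sum_congr rfl; intro k _; ring
  rw [lhs_eq]
  have expand : ∑ k ∈ Finset.range (N + 1), A k * (Real.cos φ * Real.cos ((k : ℕ) * φ))
      = (∑ k ∈ Finset.range (N + 1), (A k / 2) * Real.cos ((k + 1 : ℕ) * φ))
        + (∑ k ∈ Finset.range (N + 1), (A k / 2) * Real.cos ((k - 1 : ℕ) * φ))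
        + (∑ k ∈ Finset.range (N + 1), (if k = 0 then A 0 * (Real.cos φ - 1) / 2 else 0)) := by
    rw [← Finset.sum_add_distrib, ← Finset.sum_add_distrib]
    exact Finset.sum_congr rfl fun k _ => step k
  rw [expand,
    shift_up N (fun k => A k / 2) (fun k => Real.cos ((k : ℕ) * φ)),
    shift_down N (fun k => A k / 2) (fun k => Real.cos ((k : ℕ) * φ))
      (fun k hk => by show A k / 2 = 0; rw [hA k hk]; ring)]
  have ite_sum : ∑ k ∈ Finset.range (N + 1), (if k = 0 then A 0 * (Real.cos φ - 1) / 2 else 0)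
      = A 0 * (Real.cos φ - 1) / 2 := by simp
  rw [ite_sum]
  have split : ∑ k ∈ Finset.range (N + 2),
        (if k = 0 then A 1 / 2 else if k = 1 then A 0 + A 2 / 2
          else (A (k - 1) + A (k + 1)) / 2) * Real.cos ((k : ℕ) * φ)
      = ∑ k ∈ Finset.range (N + 2),
          (((if k = 0 then 0 else A (k - 1) / 2) * Real.cos ((k : ℕ) * φ))
            + (A (k + 1) / 2) * Real.cos ((k : ℕ) * φ)
            + (if k = 1 then (A 0 / 2) * Real.cos ((1 : ℕ) * φ) else 0)) := by
    apply Finset.sum_congr rfl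
    intro k _
    rcases k with _ | (_ | j)
    · simp; try ring
    · simp; try ring
    · simp only [Nat.add_sub_cancel, Nat.succ_ne_zero, if_false,
        Nat.succ.injEq, Nat.add_eq_zero, and_false]
      norm_num
      try ring
  rw [split, Finset.sum_add_distrib, Finset.sum_add_distrib]
  have ite2 : ∑ k ∈ Finset.range (N + 2), (if k = 1 then (A 0 / 2) * Real.cos ((1 : ℕ) * φ) else 0)
      = (A 0 / 2) * Real.cos ((1 : ℕ) * φ) := by simp
  rw [ite2]
  simp only [Nat.cast_zero, Nat.cast_one, zero_mul, Real.cos_zero, one_mul]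
  ring

lemma sum_cos_mul_sin (B : ℕ → ℝ) (hB : ∀ k, N < k → B k = 0) (hB0 : B 0 = 0) :
    Real.cos φ * ∑ k ∈ Finset.range (N + 1), B k * Real.sin ((k : ℕ) * φ)
      = ∑ k ∈ Finset.range (N + 2),
          (if k = 0 then 0 else (B (k - 1) + B (k + 1)) / 2) * Real.sin ((k : ℕ) * φ) := by
  have step : ∀ k : ℕ, B k * (Real.cos φ * Real.sin ((k : ℕ) * φ))
      = (B k / 2) * Real.sin ((k + 1 : ℕ) * φ) + (B k / 2) * Real.sin ((k - 1 : ℕ) * φ) := by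
    intro k
    rcases k with _ | j
    · simp [hB0]
    · rw [cossin φ j]
      simp only [Nat.add_sub_cancel]
      ring
  have lhs_eq : Real.cos φ * ∑ k ∈ Finset.range (N + 1), B k * Real.sin ((k : ℕ) * φ)
      = ∑ k ∈ Finset.range (N + 1), B k * (Real.cos φ * Real.sin ((k : ℕ) * φ)) := by
    rw [Finset.mul_sum]; apply Finset.sum_congr rfl; intro k _; ring
  rw [lhs_eq]
  have expand : ∑ k ∈ Finset.range (N + 1), B k * (Real.cos φ * Real.sin ((k : ℕ) * φ))
      = (∑ k ∈ Finset.range (N + 1), (B k / 2) * Real.sin ((k + 1 : ℕ) * φ))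
        + (∑ k ∈ Finset.range (N + 1), (B k / 2) * Real.sin ((k - 1 : ℕ) * φ)) := by
    rw [← Finset.sum_add_distrib]
    exact Finset.sum_congr rfl fun k _ => step k
  rw [expand,
    shift_up N (fun k => B k / 2) (fun k => Real.sin ((k : ℕ) * φ)),
    shift_down N (fun k => B k / 2) (fun k => Real.sin ((k : ℕ) * φ))
      (fun k hk => by show B k / 2 = 0; rw [hB k hk]; ring)]
  have split : ∑ k ∈ Finset.range (N + 2),
        (if k = 0 then 0 else (B (k - 1) + B (k + 1)) / 2) * Real.sin ((k : ℕ) * φ)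
      = ∑ k ∈ Finset.range (N + 2),
          ((if k = 0 then 0 else B (k - 1) / 2) * Real.sin ((k : ℕ) * φ)
            + (B (k + 1) / 2) * Real.sin ((k : ℕ) * φ)) := by
    apply Finset.sum_congr rfl
    intro k _
    rcases k with _ | j
    · simp
    · simp only [Nat.add_sub_cancel, Nat.succ_ne_zero, if_false]
      ring
  rw [split, Finset.sum_add_distrib]
  simp only [Nat.cast_zero, zero_mul, Real.sin_zero, mul_zero]
  ring

lemma sum_sin_mul_cos (A : ℕ → ℝ) (hA : ∀ k, N < k → A k = 0) :
    Real.sin φ * ∑ k ∈ Finset.range (N + 1), A k * Real.cos ((k : ℕ) * φ)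
      = ∑ k ∈ Finset.range (N + 2),
          (if k = 0 then 0 else if k = 1 then A 0 - A 2 / 2
            else (A (k - 1) - A (k + 1)) / 2) * Real.sin ((k : ℕ) * φ) := by
  have step : ∀ k : ℕ, A k * (Real.sin φ * Real.cos ((k : ℕ) * φ))
      = (A k / 2) * Real.sin ((k + 1 : ℕ) * φ) - (A k / 2) * Real.sin ((k - 1 : ℕ) * φ)
        + (if k = 0 then A 0 * Real.sin φ / 2 else 0) := by
    intro k
    rcases k with _ | j
    · simp; ring
    · rw [sincos φ j]
      simp only [Nat.add_sub_cancel, Nat.succ_ne_zero, if_false]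
      ring
  have lhs_eq : Real.sin φ * ∑ k ∈ Finset.range (N + 1), A k * Real.cos ((k : ℕ) * φ)
      = ∑ k ∈ Finset.range (N + 1), A k * (Real.sin φ * Real.cos ((k : ℕ) * φ)) := by
    rw [Finset.mul_sum]; apply Finset.sum_congr rfl; intro k _; ring
  rw [lhs_eq]
  have expand : ∑ k ∈ Finset.range (N + 1), A k * (Real.sin φ * Real.cos ((k : ℕ) * φ))
      = (∑ k ∈ Finset.range (N + 1), (A k / 2) * Real.sin ((k + 1 : ℕ) * φ))
        - (∑ k ∈ Finset.range (N + 1), (A k / 2) * Real.sin ((k - 1 : ℕ) * φ))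
        + (∑ k ∈ Finset.range (N + 1), (if k = 0 then A 0 * Real.sin φ / 2 else 0)) := by
    rw [← Finset.sum_sub_distrib, ← Finset.sum_add_distrib]
    exact Finset.sum_congr rfl fun k _ => step k
  rw [expand,
    shift_up N (fun k => A k / 2) (fun k => Real.sin ((k : ℕ) * φ)),
    shift_down N (fun k => A k / 2) (fun k => Real.sin ((k : ℕ) * φ))
      (fun k hk => by show A k / 2 = 0; rw [hA k hk]; ring)]
  have ite_sum : ∑ k ∈ Finset.range (N + 1), (if k = 0 then A 0 * Real.sin φ / 2 else 0)
      = A 0 * Real.sin φ / 2 := by simp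
  rw [ite_sum]
  have split : ∑ k ∈ Finset.range (N + 2),
        (if k = 0 then 0 else if k = 1 then A 0 - A 2 / 2
          else (A (k - 1) - A (k + 1)) / 2) * Real.sin ((k : ℕ) * φ)
      = ∑ k ∈ Finset.range (N + 2),
          ((if k = 0 then 0 else A (k - 1) / 2) * Real.sin ((k : ℕ) * φ)
            - (A (k + 1) / 2) * Real.sin ((k : ℕ) * φ)
            + (if k = 1 then (A 0 / 2) * Real.sin ((1 : ℕ) * φ) else 0)) := by
    apply Finset.sum_congr rfl
    intro k _
    rcases k with _ | (_ | j)
    · simp; try ring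
    · simp; try ring
    · simp only [Nat.add_sub_cancel, Nat.succ_ne_zero, if_false,
        Nat.succ.injEq, Nat.add_eq_zero, and_false]
      norm_num
      try ring
  rw [split, Finset.sum_add_distrib, Finset.sum_sub_distrib]
  have ite2 : ∑ k ∈ Finset.range (N + 2), (if k = 1 then (A 0 / 2) * Real.sin ((1 : ℕ) * φ) else 0)
      = (A 0 / 2) * Real.sin ((1 : ℕ) * φ) := by simp
  rw [ite2]
  simp only [Nat.cast_zero, Nat.cast_one, zero_mul, Real.sin_zero, one_mul, mul_zero]
  ring

lemma sum_sin_mul_sin (B : ℕ → ℝ) (hB : ∀ k, N < k → B k = 0) (hB0 : B 0 = 0) :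
    Real.sin φ * ∑ k ∈ Finset.range (N + 1), B k * Real.sin ((k : ℕ) * φ)
      = ∑ k ∈ Finset.range (N + 2),
          (if k = 0 then B 1 / 2 else (B (k + 1) - B (k - 1)) / 2) * Real.cos ((k : ℕ) * φ) := by
  have step : ∀ k : ℕ, B k * (Real.sin φ * Real.sin ((k : ℕ) * φ))
      = (B k / 2) * Real.cos ((k - 1 : ℕ) * φ) - (B k / 2) * Real.cos ((k + 1 : ℕ) * φ) := by
    intro k
    rcases k with _ | j
    · simp [hB0]
    · rw [sinsin φ j]
      simp only [Nat.add_sub_cancel]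
      ring
  have lhs_eq : Real.sin φ * ∑ k ∈ Finset.range (N + 1), B k * Real.sin ((k : ℕ) * φ)
      = ∑ k ∈ Finset.range (N + 1), B k * (Real.sin φ * Real.sin ((k : ℕ) * φ)) := by
    rw [Finset.mul_sum]; apply Finset.sum_congr rfl; intro k _; ring
  rw [lhs_eq]
  have expand : ∑ k ∈ Finset.range (N + 1), B k * (Real.sin φ * Real.sin ((k : ℕ) * φ))
      = (∑ k ∈ Finset.range (N + 1), (B k / 2) * Real.cos ((k - 1 : ℕ) * φ))
        - (∑ k ∈ Finset.range (N + 1), (B k / 2) * Real.cos ((k + 1 : ℕ) * φ)) := by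
    rw [← Finset.sum_sub_distrib]
    exact Finset.sum_congr rfl fun k _ => step k
  rw [expand,
    shift_up N (fun k => B k / 2) (fun k => Real.cos ((k : ℕ) * φ)),
    shift_down N (fun k => B k / 2) (fun k => Real.cos ((k : ℕ) * φ))
      (fun k hk => by show B k / 2 = 0; rw [hB k hk]; ring)]
  have split : ∑ k ∈ Finset.range (N + 2),
        (if k = 0 then B 1 / 2 else (B (k + 1) - B (k - 1)) / 2) * Real.cos ((k : ℕ) * φ)
      = ∑ k ∈ Finset.range (N + 2),
          ((B (k + 1) / 2) * Real.cos ((k : ℕ) * φ)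
            - (if k = 0 then 0 else B (k - 1) / 2) * Real.cos ((k : ℕ) * φ)) := by
    apply Finset.sum_congr rfl
    intro k _
    rcases k with _ | j
    · simp; try ring
    · simp only [Nat.add_sub_cancel, Nat.succ_ne_zero, if_false]
      ring
  rw [split, Finset.sum_sub_distrib]
  simp only [hB0, Nat.cast_zero, zero_mul, Real.cos_zero, zero_div, zero_mul]
  ring



open Polynomial in
def Dec (N : ℕ) (f : ℝ → ℝ → ℝ) : Prop :=
  ∃ c d : ℕ → Polynomial ℝ,
    (∀ k, N < k → c k = 0) ∧ (∀ k, N < k → d k = 0) ∧ d 0 = 0 ∧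
    ∀ r φ : ℝ, f r φ =
      ∑ k ∈ Finset.range (N + 1),
        ((c k).eval (r ^ 2) * r ^ k * Real.cos ((k : ℕ) * φ)
          + (d k).eval (r ^ 2) * r ^ k * Real.sin ((k : ℕ) * φ))

namespace Dec
open Polynomial

lemma congr' {N : ℕ} {f g : ℝ → ℝ → ℝ} (h : Dec N f) (hfg : ∀ r φ, f r φ = g r φ) :
    Dec N g := by
  obtain ⟨c, d, hc, hd, hd0, hf⟩ := h
  exact ⟨c, d, hc, hd, hd0, fun r φ => (hfg r φ) ▸ hf r φ⟩

lemma mono {N M : ℕ} {f : ℝ → ℝ → ℝ} (h : Dec N f) (hNM : N ≤ M) : Dec M f := by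
  obtain ⟨c, d, hc, hd, hd0, hf⟩ := h
  refine ⟨c, d, fun k hk => hc k (by omega), fun k hk => hd k (by omega), hd0, fun r φ => ?_⟩
  rw [hf r φ]
  apply Finset.sum_subset (Finset.range_subset_range.2 (by omega))
  intro k hk hk'
  simp only [Finset.mem_range, not_lt] at hk'
  rw [hc k (by omega), hd k (by omega)]
  simp

lemma zero (N : ℕ) : Dec N (fun _ _ => 0) := by
  refine ⟨fun _ => 0, fun _ => 0, fun _ _ => rfl, fun _ _ => rfl, rfl, fun r φ => ?_⟩
  simp

lemma add {N : ℕ} {f g : ℝ → ℝ → ℝ} (hf : Dec N f) (hg : Dec N g) :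
    Dec N (fun r φ => f r φ + g r φ) := by
  obtain ⟨c, d, hc, hd, hd0, hf⟩ := hf
  obtain ⟨c', d', hc', hd', hd0', hg⟩ := hg
  refine ⟨fun k => c k + c' k, fun k => d k + d' k,
    fun k hk => by show c k + c' k = 0; rw [hc k hk, hc' k hk]; ring,
    fun k hk => by show d k + d' k = 0; rw [hd k hk, hd' k hk]; ring,
    by show d 0 + d' 0 = 0; rw [hd0, hd0']; ring, fun r φ => ?_⟩
  show f r φ + g r φ = _
  rw [hf r φ, hg r φ, ← Finset.sum_add_distrib]
  apply Finset.sum_congr rfl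
  intro k _
  simp only [Polynomial.eval_add]
  ring

lemma const_mul {N : ℕ} {f : ℝ → ℝ → ℝ} (a : ℝ) (hf : Dec N f) :
    Dec N (fun r φ => a * f r φ) := by
  obtain ⟨c, d, hc, hd, hd0, hf⟩ := hf
  refine ⟨fun k => C a * c k, fun k => C a * d k,
    fun k hk => by show C a * c k = 0; rw [hc k hk]; ring,
    fun k hk => by show C a * d k = 0; rw [hd k hk]; ring,
    by show C a * d 0 = 0; rw [hd0]; ring, fun r φ => ?_⟩
  show a * f r φ = _
  rw [hf r φ, Finset.mul_sum]
  apply Finset.sum_congr rfl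
  intro k _
  simp only [Polynomial.eval_mul, Polynomial.eval_C]
  ring

lemma one : Dec 0 (fun _ _ => 1) := by
  refine ⟨fun k => if k = 0 then 1 else 0, fun _ => 0,
    fun k hk => by show (if k = 0 then 1 else 0 : Polynomial ℝ) = 0; rw [if_neg (by omega)],
    fun _ _ => rfl, rfl, fun r φ => ?_⟩
  simp

end Dec

namespace Dec
open Polynomial

lemma mulcos {N : ℕ} {f : ℝ → ℝ → ℝ} (h : Dec N f) :
    Dec (N + 1) (fun r φ => (r * Real.cos φ) * f r φ) := by
  obtain ⟨c, d, hc, hd, hd0, hf⟩ := h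
  refine ⟨fun k => if k = 0 then C (2⁻¹ : ℝ) * (X * c 1)
      else if k = 1 then c 0 + C (2⁻¹ : ℝ) * (X * c 2)
      else C (2⁻¹ : ℝ) * (c (k - 1) + X * c (k + 1)),
    fun k => if k = 0 then 0 else C (2⁻¹ : ℝ) * (d (k - 1) + X * d (k + 1)),
    ?_, ?_, ?_, ?_⟩
  · intro k hk
    beta_reduce
    rw [if_neg (by omega), if_neg (by omega), hc (k - 1) (by omega), hc (k + 1) (by omega)]
    simp
  · intro k hk
    beta_reduce
    rw [if_neg (by omega), hd (k - 1) (by omega), hd (k + 1) (by omega)]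
    simp
  · simp
  · intro r φ
    show (r * Real.cos φ) * f r φ = _
    have hA : ∀ k, N < k → (c k).eval (r ^ 2) * r ^ k = 0 := by
      intro k hk; rw [hc k hk]; simp
    have hB : ∀ k, N < k → (d k).eval (r ^ 2) * r ^ k = 0 := by
      intro k hk; rw [hd k hk]; simp
    have key1 := sum_cos_mul_cos N φ (fun k => (c k).eval (r ^ 2) * r ^ k) hA
    have key2 := sum_cos_mul_sin N φ (fun k => (d k).eval (r ^ 2) * r ^ k) hB
      (by simp [hd0])
    beta_reduce at key1 key2
    have h1 : (r * Real.cos φ) * f r φ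
        = r * (Real.cos φ * ∑ k ∈ Finset.range (N + 1),
              (c k).eval (r ^ 2) * r ^ k * Real.cos ((k : ℕ) * φ))
          + r * (Real.cos φ * ∑ k ∈ Finset.range (N + 1),
              (d k).eval (r ^ 2) * r ^ k * Real.sin ((k : ℕ) * φ)) := by
      rw [hf r φ, Finset.sum_add_distrib]; ring
    rw [h1, key1, key2, Finset.mul_sum, Finset.mul_sum, ← Finset.sum_add_distrib]
    apply Finset.sum_congr rfl
    intro k _
    beta_reduce
    rcases k with _ | (_ | j)
    · simp; ring
    · simp only [Nat.succ_ne_zero, if_false, if_pos rfl, Nat.cast_one,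
        Polynomial.eval_add, Polynomial.eval_mul, Polynomial.eval_C, Polynomial.eval_X,
        Nat.add_sub_cancel, hd0, Polynomial.eval_zero]
      norm_num
      ring
    · have h0 : j + 1 + 1 ≠ 0 := by omega
      have h1 : j + 1 + 1 ≠ 1 := by omega
      simp only [h0, h1, if_false, Nat.add_sub_cancel, Polynomial.eval_add,
        Polynomial.eval_sub, Polynomial.eval_mul, Polynomial.eval_C, Polynomial.eval_X]
      ring

lemma mulsin {N : ℕ} {f : ℝ → ℝ → ℝ} (h : Dec N f) :
    Dec (N + 1) (fun r φ => (r * Real.sin φ) * f r φ) := by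
  obtain ⟨c, d, hc, hd, hd0, hf⟩ := h
  refine ⟨fun k => if k = 0 then C (2⁻¹ : ℝ) * (X * d 1)
      else C (2⁻¹ : ℝ) * (X * d (k + 1) - d (k - 1)),
    fun k => if k = 0 then 0 else if k = 1 then c 0 - C (2⁻¹ : ℝ) * (X * c 2)
      else C (2⁻¹ : ℝ) * (c (k - 1) - X * c (k + 1)),
    ?_, ?_, ?_, ?_⟩
  · intro k hk
    beta_reduce
    rw [if_neg (by omega), hd (k - 1) (by omega), hd (k + 1) (by omega)]
    simp
  · intro k hk
    beta_reduce
    rw [if_neg (by omega), if_neg (by omega), hc (k - 1) (by omega), hc (k + 1) (by omega)]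
    simp
  · simp
  · intro r φ
    show (r * Real.sin φ) * f r φ = _
    have hA : ∀ k, N < k → (c k).eval (r ^ 2) * r ^ k = 0 := by
      intro k hk; rw [hc k hk]; simp
    have hB : ∀ k, N < k → (d k).eval (r ^ 2) * r ^ k = 0 := by
      intro k hk; rw [hd k hk]; simp
    have key1 := sum_sin_mul_cos N φ (fun k => (c k).eval (r ^ 2) * r ^ k) hA
    have key2 := sum_sin_mul_sin N φ (fun k => (d k).eval (r ^ 2) * r ^ k) hB
      (by simp [hd0])
    beta_reduce at key1 key2
    have h1 : (r * Real.sin φ) * f r φ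
        = r * (Real.sin φ * ∑ k ∈ Finset.range (N + 1),
              (c k).eval (r ^ 2) * r ^ k * Real.cos ((k : ℕ) * φ))
          + r * (Real.sin φ * ∑ k ∈ Finset.range (N + 1),
              (d k).eval (r ^ 2) * r ^ k * Real.sin ((k : ℕ) * φ)) := by
      rw [hf r φ, Finset.sum_add_distrib]; ring
    rw [h1, key1, key2, Finset.mul_sum, Finset.mul_sum, ← Finset.sum_add_distrib]
    apply Finset.sum_congr rfl
    intro k _
    beta_reduce
    rcases k with _ | (_ | j)
    · simp; ring
    · simp only [Nat.succ_ne_zero, if_false, if_pos rfl, Nat.cast_one,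
        Polynomial.eval_add, Polynomial.eval_sub, Polynomial.eval_mul, Polynomial.eval_C,
        Polynomial.eval_X, Nat.add_sub_cancel, hd0, Polynomial.eval_zero]
      norm_num
      ring
    · have h0 : j + 1 + 1 ≠ 0 := by omega
      have h1 : j + 1 + 1 ≠ 1 := by omega
      simp only [h0, h1, if_false, Nat.add_sub_cancel, Polynomial.eval_add,
        Polynomial.eval_sub, Polynomial.eval_mul, Polynomial.eval_C, Polynomial.eval_X]
      ring

end Dec

namespace Dec
open Polynomial

lemma pow_sin (n : ℕ) : Dec n (fun r φ => (r * Real.sin φ) ^ n) := by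
  induction n with
  | zero => exact Dec.one.congr' (fun r φ => (pow_zero _).symm)
  | succ n ih =>
    exact ih.mulsin.congr' (fun r φ =>
      show (r * Real.sin φ) * (r * Real.sin φ) ^ n = (r * Real.sin φ) ^ (n + 1) from
        (pow_succ' _ _).symm)

lemma monomial (m n : ℕ) :
    Dec (m + n) (fun r φ => (r * Real.cos φ) ^ m * (r * Real.sin φ) ^ n) := by
  induction m with
  | zero =>
    exact ((pow_sin n).congr' (fun r φ => by rw [pow_zero, one_mul])).mono
      (le_of_eq (Nat.zero_add n).symm)
  | succ m ih =>
    refine (ih.mulcos.congr' (fun r φ => ?_)).mono (by omega)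
    show r * Real.cos φ * ((r * Real.cos φ) ^ m * (r * Real.sin φ) ^ n)
        = (r * Real.cos φ) ^ (m + 1) * (r * Real.sin φ) ^ n
    rw [pow_succ']; ring

lemma finsum {ι : Type*} {N : ℕ} (s : Finset ι) (F : ι → ℝ → ℝ → ℝ)
    (h : ∀ i ∈ s, Dec N (F i)) :
    Dec N (fun r φ => ∑ i ∈ s, F i r φ) := by
  classical
  induction s using Finset.induction_on with
  | empty => exact (Dec.zero N).congr' (by intro r φ; simp)
  | @insert a s ha ih =>
    have h1 := (h a (Finset.mem_insert_self a s)).add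
      (ih (fun i hi => h i (Finset.mem_insert_of_mem hi)))
    exact h1.congr' (fun r φ => by rw [Finset.sum_insert ha])

end Dec

end Almansi

theorem almansi_decomposition (P : MvPolynomial (Fin 2) ℝ) :
    ∃ N : ℕ, N ≤ P.totalDegree ∧
      ∃ p : ℕ → ℕ → Polynomial ℝ,
        ∀ r : ℝ, 0 ≤ r → ∀ φ ∈ Set.Icc (0:ℝ) (2 * π),
          MvPolynomial.eval ![r * cos φ, r * sin φ] P =
            ∑ k ∈ Finset.range (N + 1),
              ∑ ℓ ∈ Finset.range (if k = 0 then 1 else 2),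
                (p k ℓ).eval (r ^ 2) * r ^ k * Yharm k ℓ φ := by
  open Almansi in
  have hP : ∀ r φ : ℝ, MvPolynomial.eval ![r * Real.cos φ, r * Real.sin φ] P
      = ∑ e ∈ P.support, P.coeff e * ((r * Real.cos φ) ^ (e 0) * (r * Real.sin φ) ^ (e 1)) := by
    intro r φ
    rw [MvPolynomial.eval_eq']
    apply Finset.sum_congr rfl
    intro e _
    rw [Fin.prod_univ_two]
    simp [Matrix.cons_val_zero, Matrix.cons_val_one, Matrix.head_cons]
  have hdec : Dec P.totalDegree
      (fun r φ => MvPolynomial.eval ![r * Real.cos φ, r * Real.sin φ] P) := by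
    refine Dec.congr' (Dec.finsum P.support
      (fun e => fun r φ => P.coeff e * ((r * Real.cos φ) ^ (e 0) * (r * Real.sin φ) ^ (e 1))) ?_)
      (fun r φ => (hP r φ).symm)
    intro e he
    have hdeg : e 0 + e 1 ≤ P.totalDegree := by
      have h1 : (e.sum fun _ n => n) ≤ P.totalDegree := MvPolynomial.le_totalDegree he
      have h2 : (e.sum fun _ n => n) = e 0 + e 1 := by
        rw [Finsupp.sum_fintype _ _ (fun _ => rfl), Fin.sum_univ_two]
      omega
    exact (Dec.const_mul (P.coeff e) (Dec.monomial (e 0) (e 1))).mono hdeg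
  obtain ⟨c, d, hc, hd, hd0, hrep⟩ := hdec
  have h2pi : (0:ℝ) < 2 * π := by positivity
  have hsq : Real.sqrt (2 * π) ≠ 0 := ne_of_gt (Real.sqrt_pos.mpr h2pi)
  have hsp : Real.sqrt π ≠ 0 := ne_of_gt (Real.sqrt_pos.mpr Real.pi_pos)
  refine ⟨P.totalDegree, le_rfl,
    fun k ℓ => if k = 0 then Polynomial.C (Real.sqrt (2 * π)) * c 0
      else if ℓ = 0 then Polynomial.C (Real.sqrt π) * c k
      else Polynomial.C (Real.sqrt π) * d k, ?_⟩
  intro r _ φ _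
  refine (hrep r φ).trans ?_
  apply Finset.sum_congr rfl
  intro k _
  rcases k with _ | j
  · simp [Yharm, hd0]
    field_simp
  · have hj : j + 1 ≠ 0 := by omega
    simp [Yharm, hj, Finset.sum_range_succ]
    field_simp
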